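/- arXiv:1311.2215 — 5 statements merged into one kernel-verified Lean document; each statement's English description precedes it below -/
import Mathlib

section
/- Let S be a finite commutative semigroup with two-selector K^γ_{αβ}, and let α_γ be scalars such that the symmetric matrix m_{αβ} = Σ_γ α_γ K^γ_{αβ} is invertible with inverse m^{αβ}. Then for all α0, α1, α2: Σ_β K^{α1}_{α0 β} m^{β α2} = Σ_β K^{α2}_{α0 β} m^{α1 β}. -/
/-!
Writing `L` for the matrix of left multiplication by `α₀`, the metric satisfies
`m_{x, α₀ z} = c(x α₀ z) = m_{α₀ x, z}`, i.e. `m Lᵀ = L m`, by associativity and commutativity.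
Conjugating by the inverse of `m` gives `Lᵀ m⁻¹ = m⁻¹ L`, whose `(α₁, α₂)` entry is the claim.
-/

open scoped Matrix

section

variable {S R : Type*} [DecidableEq S]

def leftMulMatrix [Mul S] [Zero R] [One R] (a : S) : Matrix S S R :=
  Matrix.of fun x y => if a * x = y then 1 else 0

variable [Fintype S] [Semiring R]

theorem mul_leftMulMatrix_transpose_apply [Mul S] (M : Matrix S S R) (a x z : S) :
    (M * (leftMulMatrix a)ᵀ : Matrix S S R) x z = M x (a * z) := by
  simp [Matrix.mul_apply, leftMulMatrix]

theorem leftMulMatrix_mul_apply [Mul S] (M : Matrix S S R) (a x z : S) :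
    (leftMulMatrix a * M : Matrix S S R) x z = M (a * x) z := by
  simp [Matrix.mul_apply, leftMulMatrix]

theorem semiconjBy_leftMulMatrix_transpose [CommSemigroup S] (f : S → R) (a : S) :
    SemiconjBy (Matrix.of fun x y => f (x * y)) (leftMulMatrix a)ᵀ (leftMulMatrix a) := by
  ext x z
  rw [mul_leftMulMatrix_transpose_apply, leftMulMatrix_mul_apply]
  simp only [Matrix.of_apply, mul_left_comm, mul_assoc]

theorem twoSelector_metric_eq [Mul S] (K : S → S → S → R)
    (hK : ∀ a b c, K a b c = if a * b = c then 1 else 0) (c : S → R) :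
    (Matrix.of fun a b => ∑ γ, c γ * K a b γ) = Matrix.of fun a b => c (a * b) := by
  ext a b
  simp [hK]

end

theorem leftMulMatrix_transpose_mul_eq_mul_leftMulMatrix {S R : Type*} [Fintype S]
    [DecidableEq S] [CommSemigroup S] [CommRing R] (f : S → R) (mInv : Matrix S S R)
    (hInv : mInv * Matrix.of (fun x y => f (x * y)) = 1) (a : S) :
    (leftMulMatrix a)ᵀ * mInv = mInv * leftMulMatrix a :=
  SemiconjBy.units_inv_symm_left (a := ⟨_, mInv, mul_eq_one_comm.mp hInv, hInv⟩)
    (semiconjBy_leftMulMatrix_transpose f a) |>.eq.symm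

open Finset in
theorem twoSelector_inverse_metric_identity_general {S : Type*} [CommSemigroup S] [Fintype S]
    [DecidableEq S] {F : Type*} [Field F]
    (K : S → S → S → F) (hK : ∀ a b c, K a b c = if a * b = c then 1 else 0)
    (c : S → F) (m mInv : Matrix S S F)
    (hm : ∀ a b, m a b = ∑ γ : S, c γ * K a b γ)
    (hInv₁ : mInv * m = 1)
    (α₀ α₁ α₂ : S) :
    ∑ β : S, K α₀ β α₁ * mInv β α₂ = ∑ β : S, K α₀ β α₂ * mInv α₁ β := by
  have hm' : m = Matrix.of fun a b => c (a * b) := by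
    rw [← twoSelector_metric_eq K hK c]
    exact Matrix.ext hm
  have hL : ∀ x y, K α₀ x y = leftMulMatrix α₀ x y := by
    simp [hK, leftMulMatrix]
  have key := congrFun₂
    (leftMulMatrix_transpose_mul_eq_mul_leftMulMatrix c mInv (hm' ▸ hInv₁) α₀) α₁ α₂
  simpa only [Matrix.mul_apply, Matrix.transpose_apply, hL, mul_comm (mInv α₁ _)] using key

open Finset in
/-- If `m_{αβ} = Σ_γ α_γ K^γ_{αβ}` is invertible with inverse `m^{αβ}`, then
`Σ_β K^{α1}_{α0 β} m^{β α2} = Σ_β K^{α2}_{α0 β} m^{α1 β}`. -/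
theorem twoSelector_inverse_metric_identity {S : Type*} [CommSemigroup S] [Fintype S]
    [DecidableEq S] {F : Type*} [Field F]
    (K : S → S → S → F) (hK : ∀ a b c, K a b c = if a * b = c then 1 else 0)
    (c : S → F) (m mInv : Matrix S S F)
    (hm : ∀ a b, m a b = ∑ γ : S, c γ * K a b γ)
    (hInv₁ : mInv * m = 1) (hInv₂ : m * mInv = 1)
    (α₀ α₁ α₂ : S) :
    ∑ β : S, K α₀ β α₁ * mInv β α₂ = ∑ β : S, K α₀ β α₂ * mInv α₁ β :=
  twoSelector_inverse_metric_identity_general K hK c m mInv hm hInv₁ α₀ α₁ α₂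
end

section
/- Let g be a Lie algebra with structure constants f^C_{AB} in a basis {T_A}, and let C^{AB} be a symmetric tensor satisfying the quadratic Casimir condition f^{A1}_{A0 B} C^{B A2} + f^{A2}_{A0 B} C^{A1 B} = 0 (summation over B). Let S be a finite commutative semigroup with two-selector K and suppose m^{αβ} satisfies K^{α1}_{α0 β} m^{β α2} = K^{α2}_{α0 β} m^{α1 β}. Then the tensor C^{(A,α)(B,β)} = m^{αβ} C^{AB} satisfies the quadratic Casimir condition for the S-expanded algebra with structure constants f^{(C,γ)}_{(A,α)(B,β)} = K^γ_{αβ} f^C_{AB}. -/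
open Finset in
/-- If `C^{AB}` satisfies the quadratic Casimir condition for structure constants
`f^C_{AB}`, and `m^{αβ}` satisfies `K^{α1}_{α0 β} m^{β α2} = K^{α2}_{α0 β} m^{α1 β}`,
then `C^{(A,α)(B,β)} = m^{αβ} C^{AB}` satisfies the quadratic Casimir condition for the
`S`-expanded structure constants `f^{(C,γ)}_{(A,α)(B,β)} = K^γ_{αβ} f^C_{AB}`. -/
theorem expanded_quadratic_casimir {S : Type*} [CommSemigroup S] [Fintype S]
    [DecidableEq S] {ι : Type*} [Fintype ι] {R : Type*} [CommRing R]
    (f : ι → ι → ι → R)       -- structure constants f^{A2}_{A0 A1} = f A0 A1 A2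
    (K : S → S → S → R) (hK : ∀ a b c, K a b c = if a * b = c then 1 else 0)
    (C : ι → ι → R) (hCsymm : ∀ A B, C A B = C B A)
    (hC : ∀ A₀ A₁ A₂, (∑ B : ι, f A₀ B A₁ * C B A₂) + (∑ B : ι, f A₀ B A₂ * C A₁ B) = 0)
    (m : S → S → R) (hmsymm : ∀ α β, m α β = m β α)
    (hm : ∀ α₀ α₁ α₂, ∑ β : S, K α₀ β α₁ * m β α₂ = ∑ β : S, K α₀ β α₂ * m α₁ β) :
    ∀ A₀α₀ A₁α₁ A₂α₂ : ι × S,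
      (∑ Bβ : ι × S,
          (K A₀α₀.2 Bβ.2 A₁α₁.2 * f A₀α₀.1 Bβ.1 A₁α₁.1) * (m Bβ.2 A₂α₂.2 * C Bβ.1 A₂α₂.1)) +
      (∑ Bβ : ι × S,
          (K A₀α₀.2 Bβ.2 A₂α₂.2 * f A₀α₀.1 Bβ.1 A₂α₂.1) * (m A₁α₁.2 Bβ.2 * C A₁α₁.1 Bβ.1))
        = 0 := by
  rintro ⟨A₀, α₀⟩ ⟨A₁, α₁⟩ ⟨A₂, α₂⟩
  have h1 : (∑ Bβ : ι × S,
      (K α₀ Bβ.2 α₁ * f A₀ Bβ.1 A₁) * (m Bβ.2 α₂ * C Bβ.1 A₂))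
      = (∑ β : S, K α₀ β α₁ * m β α₂) * (∑ B : ι, f A₀ B A₁ * C B A₂) := by
    rw [Finset.sum_mul_sum, Fintype.sum_prod_type_right]
    exact Finset.sum_congr rfl fun β _ => Finset.sum_congr rfl fun B _ => by ring
  have h2 : (∑ Bβ : ι × S,
      (K α₀ Bβ.2 α₂ * f A₀ Bβ.1 A₂) * (m α₁ Bβ.2 * C A₁ Bβ.1))
      = (∑ β : S, K α₀ β α₂ * m α₁ β) * (∑ B : ι, f A₀ B A₂ * C A₁ B) := by
    rw [Finset.sum_mul_sum, Fintype.sum_prod_type_right]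
    exact Finset.sum_congr rfl fun β _ => Finset.sum_congr rfl fun B _ => by ring
  simp only [h1, h2, ← hm α₀ α₁ α₂]
  rw [← mul_add, hC A₀ A₁ A₂, mul_zero]
end

section
/- Let g be a Lie algebra decomposed as g = V0 ⊕ V1 with [V0,V0]⊆V0, [V0,V1]⊆V1, [V1,V1]⊆V0, and let S be a finite abelian semigroup with a partition S = S0 ∪ S1 satisfying S0·S0 ⊆ S0, S0·S1 ⊆ S1, S1·S1 ⊆ S0. Then the subspace G_R = (S0 ⊗ V0) ⊕ (S1 ⊗ V1) of the S-expanded Lie algebra S ⊗ g is closed under the bracket [λα ⊗ x, λβ ⊗ y] = (λα λβ) ⊗ [x,y], hence is a Lie subalgebra. -/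
/-- The bracket of the `S`-expanded Lie algebra `S ⊗ g`, modelled on `S →₀ g`:
`[λα ⊗ x, λβ ⊗ y] = (λα λβ) ⊗ [x, y]`, extended bilinearly. -/
noncomputable def expBracket {S : Type*} [Mul S] {L : Type*} [LieRing L]
    (f g : S →₀ L) : S →₀ L :=
  f.sum fun a x => g.sum fun b y => Finsupp.single (a * b) ⁅x, y⁆

section aux
variable {S : Type*} [Mul S] {R : Type*} [CommRing R]
    {L : Type*} [LieRing L] [LieAlgebra R L]

lemma expBracket_single_single (a b : S) (x y : L) :
    expBracket (Finsupp.single a x) (Finsupp.single b y)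
      = Finsupp.single (a * b) ⁅x, y⁆ := by
  simp [expBracket, Finsupp.sum_single_index]

lemma expBracket_add_left (f f' g : S →₀ L) :
    expBracket (f + f') g = expBracket f g + expBracket f' g := by
  classical
  unfold expBracket
  rw [Finsupp.sum_add_index] <;> simp [Finsupp.sum_add]

lemma expBracket_add_right (f g g' : S →₀ L) :
    expBracket f (g + g') = expBracket f g + expBracket f g' := by
  classical
  unfold expBracket
  rw [← Finsupp.sum_add]
  refine Finsupp.sum_congr fun a _ => ?_
  rw [Finsupp.sum_add_index] <;> simp

lemma expBracket_smul_left (r : R) (f g : S →₀ L) :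
    expBracket (r • f) g = r • expBracket f g := by
  classical
  unfold expBracket
  rw [Finsupp.sum_smul_index', Finsupp.smul_sum] <;>
    simp [Finsupp.smul_sum, smul_lie]

lemma expBracket_smul_right (r : R) (f g : S →₀ L) :
    expBracket f (r • g) = r • expBracket f g := by
  classical
  unfold expBracket
  rw [Finsupp.smul_sum]
  refine Finsupp.sum_congr fun a _ => ?_
  rw [Finsupp.sum_smul_index', Finsupp.smul_sum] <;> simp [lie_smul]

lemma expBracket_zero_left (g : S →₀ L) : expBracket 0 g = 0 := by
  simp [expBracket]

lemma expBracket_zero_right (f : S →₀ L) : expBracket f 0 = 0 := by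
  simp [expBracket]

end aux


/-- If `g = V0 ⊕ V1` is a resonant decomposition and `S = S0 ∪ S1` a resonant partition
of the abelian semigroup `S`, then `G_R = (S0 ⊗ V0) ⊕ (S1 ⊗ V1)` is closed under the
bracket of `S ⊗ g`, hence is a Lie subalgebra. -/
theorem resonant_subalgebra_closed
    {S : Type*} [CommSemigroup S] {R : Type*} [CommRing R]
    {L : Type*} [LieRing L] [LieAlgebra R L]
    (V0 V1 : Submodule R L) (hdecomp : V0 ⊔ V1 = ⊤)
    (h00 : ∀ x ∈ V0, ∀ y ∈ V0, ⁅x, y⁆ ∈ V0)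
    (h01 : ∀ x ∈ V0, ∀ y ∈ V1, ⁅x, y⁆ ∈ V1)
    (h11 : ∀ x ∈ V1, ∀ y ∈ V1, ⁅x, y⁆ ∈ V0)
    (S0 S1 : Set S) (hpart : S0 ∪ S1 = Set.univ)
    (hS00 : ∀ a ∈ S0, ∀ b ∈ S0, a * b ∈ S0)
    (hS01 : ∀ a ∈ S0, ∀ b ∈ S1, a * b ∈ S1)
    (hS11 : ∀ a ∈ S1, ∀ b ∈ S1, a * b ∈ S0) :
    ∀ f ∈ Submodule.span R
        ({z : S →₀ L | ∃ a ∈ S0, ∃ x ∈ V0, z = Finsupp.single a x} ∪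
         {z : S →₀ L | ∃ a ∈ S1, ∃ x ∈ V1, z = Finsupp.single a x}),
      ∀ g ∈ Submodule.span R
        ({z : S →₀ L | ∃ a ∈ S0, ∃ x ∈ V0, z = Finsupp.single a x} ∪
         {z : S →₀ L | ∃ a ∈ S1, ∃ x ∈ V1, z = Finsupp.single a x}),
        expBracket f g ∈ Submodule.span R
        ({z : S →₀ L | ∃ a ∈ S0, ∃ x ∈ V0, z = Finsupp.single a x} ∪
         {z : S →₀ L | ∃ a ∈ S1, ∃ x ∈ V1, z = Finsupp.single a x}) := by
  set Gen := ({z : S →₀ L | ∃ a ∈ S0, ∃ x ∈ V0, z = Finsupp.single a x} ∪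
         {z : S →₀ L | ∃ a ∈ S1, ∃ x ∈ V1, z = Finsupp.single a x}) with hGen
  intro f hf
  induction hf using Submodule.span_induction with
  | mem z hz =>
    intro g hg
    induction hg using Submodule.span_induction with
    | mem w hw =>
      apply Submodule.subset_span
      obtain ⟨a, ha, x, hx, rfl⟩ | ⟨a, ha, x, hx, rfl⟩ := hz <;>
        obtain ⟨b, hb, y, hy, rfl⟩ | ⟨b, hb, y, hy, rfl⟩ := hw <;>
        rw [expBracket_single_single]
      · exact Or.inl ⟨a*b, hS00 a ha b hb, _, h00 x hx y hy, rfl⟩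
      · exact Or.inr ⟨a*b, hS01 a ha b hb, _, h01 x hx y hy, rfl⟩
      · refine Or.inr ⟨a*b, by rw [mul_comm]; exact hS01 b hb a ha, ⁅x, y⁆, ?_, rfl⟩
        rw [← lie_skew]; exact neg_mem (h01 y hy x hx)
      · exact Or.inl ⟨a*b, hS11 a ha b hb, _, h11 x hx y hy, rfl⟩
    | zero => rw [expBracket_zero_right]; exact Submodule.zero_mem _
    | add g g' _ _ ih ih' => rw [expBracket_add_right]; exact Submodule.add_mem _ ih ih'
    | smul r g _ ih => rw [expBracket_smul_right]; exact Submodule.smul_mem _ r ih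
  | zero => intro g hg; rw [expBracket_zero_left]; exact Submodule.zero_mem _
  | add f f' _ _ ih ih' =>
    intro g hg
    rw [expBracket_add_left]; exact Submodule.add_mem _ (ih g hg) (ih' g hg)
  | smul r f _ ih =>
    intro g hg
    rw [expBracket_smul_left]; exact Submodule.smul_mem _ r (ih g hg)
end

section
/- Define N_ab = J_ab − (c/(4a²)) Z_ab, L_ab = (c/(4a²)) Z_ab, L_a = (1/(2a)) P_a in the semi-simple extended Poincaré algebra with brackets [J_ab,J_cd] = η_ad J_bc + η_bc J_ad − η_ac J_bd − η_bd J_ac, [J_ab,P_c] = η_bc P_a − η_ac P_b, [P_a,P_b] = c Z_ab, [J_ab,Z_cd] = η_ad Z_bc + η_bc Z_ad − η_ac Z_bd − η_bd Z_ac, [Z_ab,P_c] = (4a²/c)(η_bc P_a − η_ac P_b), [Z_ab,Z_cd] = (4a²/c)(η_ad Z_bc + η_bc Z_ad − η_ac Z_bd − η_bd Z_ac). Then the new generators satisfy [N_ab,N_cd] = η_ad N_bc + η_bc N_ad − η_ac N_bd − η_bd N_ac, [L_ab,L_cd] = η_ad L_bc + η_bc L_ad − η_ac L_bd − η_bd L_ac,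 [L_ab,L_c] = η_bc L_a − η_ac L_b, [L_a,L_c] = L_ac, [N_ab,L_cd] = 0, and [N_ab,L_c] = 0. -/
set_option maxHeartbeats 1000000

/-- The Minkowski metric components `η_ab`. -/
def eta (D : ℕ) (a b : Fin D) : ℝ :=
  if a = b then (if (a : ℕ) = 0 then -1 else 1) else 0

lemma eta_symm (D : ℕ) (i j : Fin D) : eta D i j = eta D j i := by
  unfold eta
  rcases eq_or_ne i j with rfl | h
  · rfl
  · rw [if_neg h, if_neg (Ne.symm h)]

/-- In the SSEP algebra, the generators `N_ab = J_ab − (c/(4a²)) Z_ab`,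
`L_ab = (c/(4a²)) Z_ab`, `L_a = (1/(2a)) P_a` satisfy the brackets of the direct sum
`so(D−1,1) ⊕ so(D−1,2)`. -/
theorem SSEP_change_of_basis (D : ℕ) (𝔤 : Type*) [LieRing 𝔤] [LieAlgebra ℝ 𝔤]
    (J Z : Fin D → Fin D → 𝔤) (P : Fin D → 𝔤)
    (a c : ℝ) (ha : a ≠ 0) (hc : c ≠ 0)
    (hJanti : ∀ i j, J i j = -J j i) (hZanti : ∀ i j, Z i j = -Z j i)
    (hJJ : ∀ i j k l, ⁅J i j, J k l⁆ =
      eta D i l • J j k + eta D j k • J i l - eta D i k • J j l - eta D j l • J i k)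
    (hJP : ∀ i j k, ⁅J i j, P k⁆ = eta D j k • P i - eta D i k • P j)
    (hPP : ∀ i j, ⁅P i, P j⁆ = c • Z i j)
    (hJZ : ∀ i j k l, ⁅J i j, Z k l⁆ =
      eta D i l • Z j k + eta D j k • Z i l - eta D i k • Z j l - eta D j l • Z i k)
    (hZP : ∀ i j k, ⁅Z i j, P k⁆ = (4 * a ^ 2 / c) • (eta D j k • P i - eta D i k • P j))
    (hZZ : ∀ i j k l, ⁅Z i j, Z k l⁆ = (4 * a ^ 2 / c) •
      (eta D i l • Z j k + eta D j k • Z i l - eta D i k • Z j l - eta D j l • Z i k)) :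
    let N : Fin D → Fin D → 𝔤 := fun i j => J i j - (c / (4 * a ^ 2)) • Z i j
    let L : Fin D → Fin D → 𝔤 := fun i j => (c / (4 * a ^ 2)) • Z i j
    let Lv : Fin D → 𝔤 := fun i => (1 / (2 * a)) • P i
    (∀ i j k l, ⁅N i j, N k l⁆ =
      eta D i l • N j k + eta D j k • N i l - eta D i k • N j l - eta D j l • N i k) ∧
    (∀ i j k l, ⁅L i j, L k l⁆ =
      eta D i l • L j k + eta D j k • L i l - eta D i k • L j l - eta D j l • L i k) ∧
    (∀ i j k, ⁅L i j, Lv k⁆ = eta D j k • Lv i - eta D i k • Lv j) ∧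
    (∀ i k, ⁅Lv i, Lv k⁆ = L i k) ∧
    (∀ i j k l, ⁅N i j, L k l⁆ = 0) ∧
    (∀ i j k, ⁅N i j, Lv k⁆ = 0) := by
  intro N L Lv
  have hZJ : ∀ i j k l, ⁅Z i j, J k l⁆ =
      eta D i l • Z j k + eta D j k • Z i l - eta D i k • Z j l - eta D j l • Z i k := by
    intro i j k l
    rw [← lie_skew, hJZ, hZanti l i, hZanti k j, hZanti l j, hZanti k i,
      eta_symm D k j, eta_symm D l i, eta_symm D k i, eta_symm D l j]
    module
  have ha4 : (4 : ℝ) * a ^ 2 ≠ 0 := by positivity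
  refine ⟨?_, ?_, ?_, ?_, ?_, ?_⟩ <;> intros <;>
    simp only [N, L, Lv, lie_sub, sub_lie, lie_smul, smul_lie,
      hJJ, hJZ, hZJ, hZZ, hJP, hZP, hPP] <;>
    match_scalars <;> field_simp <;> (first | ring1 | exact Or.inl (by ring1) | exact Or.inl trivial)
end

section
/- Let g = so(D−1,2) with generators J_ab (Lorentz) and P_a (AdS boosts) satisfying [P_a,P_b] = J_ab, [J_ab,P_c] = η_cb P_a − η_ca P_b, and the standard Lorentz brackets. Performing the S_S2-expansion with resonant partition S0 = {λ0, λ2}, S1 = {λ1} and setting J̃_ab = λ0⊗J_ab, Z̃_ab = λ2⊗J_ab, P̃_a = λ1⊗P_a yields the brackets [J̃_ab, J̃_cd] = Lorentz-type in J̃, [P̃_a, P̃_b] = Z̃_ab, [J̃_ab, P̃_c] = η_bc P̃_a − η_ac P̃_b, [J̃_ab, Z̃_cd] = Lorentz-type in Z̃, [Z̃_ab, P̃_c] = η_bc P̃_a − η_ac P̃_b, [Z̃_ab, Z̃_cd] = Lorentz-type in Z̃. -/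
/-- The three-element set `{λ0, λ1, λ2}`. -/
inductive S2 : Type
  | l0 | l1 | l2
  deriving DecidableEq

instance : Fintype S2 where
  elems := {S2.l0, S2.l1, S2.l2}
  complete := by intro x; cases x <;> simp

/-- The multiplication of the commutative monoid `S_S2` (`λ0` is the identity,
`λ1·λ1 = λ2`, `λ1·λ2 = λ1`, `λ2·λ2 = λ2`). -/
def S2.mul : S2 → S2 → S2
  | .l0, a => a
  | a, .l0 => a
  | .l1, .l1 => .l2
  | .l1, .l2 => .l1
  | .l2, .l1 => .l1
  | .l2, .l2 => .l2

instance : CommMonoid S2 where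
  mul := S2.mul
  one := S2.l0
  mul_assoc := by decide
  one_mul := by decide
  mul_one := by decide
  mul_comm := by decide

theorem eta_comm (D : ℕ) (a b : Fin D) : eta D a b = eta D b a := by
  by_cases h : a = b
  · rw [h]
  · simp only [eta, if_neg h, if_neg (Ne.symm h)]

open Finsupp

section Expansion

variable {S : Type*} [Mul S] {L : Type*} [LieRing L]

theorem expBracket_single (a b : S) (x y : L) :
    expBracket (single a x) (single b y) = single (a * b) ⁅x, y⁆ := by
  simp [expBracket]

theorem expBracket_single_of_bracket_eq {a b c : S} {x y z : L} (hab : a * b = c)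
    (hxy : ⁅x, y⁆ = z) : expBracket (single a x) (single b y) = single c z := by
  rw [expBracket_single, hab, hxy]

variable [Module ℝ L] {D : ℕ}

theorem expBracket_single_of_lorentz {J : Fin D → Fin D → L}
    (hJJ : ∀ i j k l, ⁅J i j, J k l⁆ =
      eta D i l • J j k + eta D j k • J i l - eta D i k • J j l - eta D j l • J i k)
    {a b c : S} (hab : a * b = c) (i j k l : Fin D) :
    expBracket (single a (J i j)) (single b (J k l)) =
      eta D i l • single c (J j k) + eta D j k • single c (J i l) -
        eta D i k • single c (J j l) - eta D j l • single c (J i k) := by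
  simp only [expBracket_single_of_bracket_eq hab (hJJ i j k l), single_add, single_sub,
    smul_single]

theorem expBracket_single_of_boost {J : Fin D → Fin D → L} {P : Fin D → L}
    (hJP : ∀ i j k, ⁅J i j, P k⁆ = eta D k j • P i - eta D k i • P j)
    {a b c : S} (hab : a * b = c) (i j k : Fin D) :
    expBracket (single a (J i j)) (single b (P k)) =
      eta D j k • single c (P i) - eta D i k • single c (P j) := by
  simp only [expBracket_single_of_bracket_eq hab (hJP i j k), single_sub, smul_single,
    eta_comm D k]

end Expansion

theorem S2_expansion_of_AdS_general (D : ℕ) (𝔤 : Type*) [LieRing 𝔤] [LieAlgebra ℝ 𝔤]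
    (J : Fin D → Fin D → 𝔤) (P : Fin D → 𝔤)
    (hJJ : ∀ i j k l, ⁅J i j, J k l⁆ =
      eta D i l • J j k + eta D j k • J i l - eta D i k • J j l - eta D j l • J i k)
    (hJP : ∀ i j k, ⁅J i j, P k⁆ = eta D k j • P i - eta D k i • P j)
    (hPP : ∀ i j, ⁅P i, P j⁆ = J i j) :
    let Jt : Fin D → Fin D → (S2 →₀ 𝔤) := fun i j => Finsupp.single S2.l0 (J i j)
    let Zt : Fin D → Fin D → (S2 →₀ 𝔤) := fun i j => Finsupp.single S2.l2 (J i j)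
    let Pt : Fin D → (S2 →₀ 𝔤) := fun i => Finsupp.single S2.l1 (P i)
    (∀ i j k l, expBracket (Jt i j) (Jt k l) =
      eta D i l • Jt j k + eta D j k • Jt i l - eta D i k • Jt j l - eta D j l • Jt i k) ∧
    (∀ i j, expBracket (Pt i) (Pt j) = Zt i j) ∧
    (∀ i j k, expBracket (Jt i j) (Pt k) = eta D j k • Pt i - eta D i k • Pt j) ∧
    (∀ i j k l, expBracket (Jt i j) (Zt k l) =
      eta D i l • Zt j k + eta D j k • Zt i l - eta D i k • Zt j l - eta D j l • Zt i k) ∧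
    (∀ i j k, expBracket (Zt i j) (Pt k) = eta D j k • Pt i - eta D i k • Pt j) ∧
    (∀ i j k l, expBracket (Zt i j) (Zt k l) =
      eta D i l • Zt j k + eta D j k • Zt i l - eta D i k • Zt j l - eta D j l • Zt i k) := by
  intro Jt Zt Pt
  -- each `rfl` is one product of `S_S2`: λ0λ0 = λ0, λ1λ1 = λ2, λ0λ1 = λ1, λ0λ2 = λ2, λ2λ1 = λ1, λ2λ2 = λ2
  exact ⟨expBracket_single_of_lorentz hJJ rfl,
    fun i j => expBracket_single_of_bracket_eq rfl (hPP i j),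
    expBracket_single_of_boost hJP rfl,
    expBracket_single_of_lorentz hJJ rfl,
    expBracket_single_of_boost hJP rfl,
    expBracket_single_of_lorentz hJJ rfl⟩

/-- The `S_S2`-expansion of the AdS algebra: setting `J̃_ab = λ0⊗J_ab`,
`Z̃_ab = λ2⊗J_ab`, `P̃_a = λ1⊗P_a` yields the SSEP brackets. -/
theorem S2_expansion_of_AdS (D : ℕ) (𝔤 : Type*) [LieRing 𝔤] [LieAlgebra ℝ 𝔤]
    (J : Fin D → Fin D → 𝔤) (P : Fin D → 𝔤)
    (hJanti : ∀ i j, J i j = -J j i)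
    (hJJ : ∀ i j k l, ⁅J i j, J k l⁆ =
      eta D i l • J j k + eta D j k • J i l - eta D i k • J j l - eta D j l • J i k)
    (hJP : ∀ i j k, ⁅J i j, P k⁆ = eta D k j • P i - eta D k i • P j)
    (hPP : ∀ i j, ⁅P i, P j⁆ = J i j) :
    let Jt : Fin D → Fin D → (S2 →₀ 𝔤) := fun i j => Finsupp.single S2.l0 (J i j)
    let Zt : Fin D → Fin D → (S2 →₀ 𝔤) := fun i j => Finsupp.single S2.l2 (J i j)
    let Pt : Fin D → (S2 →₀ 𝔤) := fun i => Finsupp.single S2.l1 (P i)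
    (∀ i j k l, expBracket (Jt i j) (Jt k l) =
      eta D i l • Jt j k + eta D j k • Jt i l - eta D i k • Jt j l - eta D j l • Jt i k) ∧
    (∀ i j, expBracket (Pt i) (Pt j) = Zt i j) ∧
    (∀ i j k, expBracket (Jt i j) (Pt k) = eta D j k • Pt i - eta D i k • Pt j) ∧
    (∀ i j k l, expBracket (Jt i j) (Zt k l) =
      eta D i l • Zt j k + eta D j k • Zt i l - eta D i k • Zt j l - eta D j l • Zt i k) ∧
    (∀ i j k, expBracket (Zt i j) (Pt k) = eta D j k • Pt i - eta D i k • Pt j) ∧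
    (∀ i j k l, expBracket (Zt i j) (Zt k l) =
      eta D i l • Zt j k + eta D j k • Zt i l - eta D i k • Zt j l - eta D j l • Zt i k) :=
  S2_expansion_of_AdS_general D 𝔤 J P hJJ hJP hPP
end
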